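/- arXiv:2005.06276 — 2 statements merged into one kernel-verified Lean document; each statement's English description precedes it below -/
import Mathlib

section
/- Let f : ℝ^p → ℝ be differentiable, μ-strongly convex, and have L-Lipschitz continuous gradient. Then for all x, y ∈ ℝ^p, ⟨∇f(x) - ∇f(y), x - y⟩ ≥ (μL/(μ+L)) ‖x - y‖² + (1/(μ+L)) ‖∇f(x) - ∇f(y)‖². -/
/-!
Put `h = f - μ/2 ‖·‖²` and `K = L - μ`. Strong convexity makes `h` convex, and the Lipschitz bound
on `g = ∇f` makes `K/2 ‖·‖² - h = L/2 ‖·‖² - f` convex, since its gradient `L • id - g` is monotone.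
For such an `h` the gradient `∇h = g - μ • id` is cocoercive (Baillon–Haddad): along the step
`z = y - t • (∇h y - ∇h x)`, the tangent lower bound at `x` and the quadratic upper bound at `y`
give, for the best `t`, `‖∇h y - ∇h x‖² ≤ 2K (h y - h x - ⟪∇h x, y - x⟫)`, and symmetrizing in
`x, y` gives `‖∇h x - ∇h y‖² ≤ K ⟪∇h x - ∇h y, x - y⟫`. Expanding `∇h = g - μ • id` is the claimed inequality.
-/

open RealInnerProductSpace Set

/- Stated without dividing by `K`, so that it covers `K = 0` (the case `μ = L`), where the
hypothesis forces `a = 0`. -/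
theorem le_neg_two_mul_mul_of_forall_le {a c K : ℝ} (hK : 0 ≤ K)
    (h : ∀ t : ℝ, c ≤ (K / 2 * t ^ 2 - t) * a) : a ≤ -(2 * K * c) := by
  have hc : c ≤ 0 := by simpa using h 0
  have hdiscr : discrim (K / 2 * a) (-a) (-c) ≤ 0 :=
    discrim_le_zero fun t => by nlinarith [h t]
  rw [discrim] at hdiscr
  nlinarith [mul_nonpos_of_nonneg_of_nonpos hK hc]

section InnerProductSpace

variable {E : Type*} [NormedAddCommGroup E] [InnerProductSpace ℝ E]

theorem ConvexOn.comp_add_smul {h : E → ℝ} (hconv : ConvexOn ℝ univ h) (x v : E) :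
    ConvexOn ℝ univ (fun s : ℝ => h (x + s • v)) := by
  simpa [Function.comp_def, AffineMap.lineMap_apply, add_comm]
    using hconv.comp_affineMap (AffineMap.lineMap x (x + v) : ℝ →ᵃ[ℝ] E)

theorem inner_lower_bound_of_norm_sub_smul_sq_le {u w : E} {μ L : ℝ} (hμL : 0 < μ + L)
    (h : ‖u - μ • w‖ ^ 2 ≤ (L - μ) * ⟪u - μ • w, w⟫) :
    μ * L / (μ + L) * ‖w‖ ^ 2 + 1 / (μ + L) * ‖u‖ ^ 2 ≤ ⟪u, w⟫ := by
  rw [norm_sub_sq_real, inner_sub_left, norm_smul, real_inner_smul_left, real_inner_smul_right,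
    real_inner_self_eq_norm_sq, mul_pow, Real.norm_eq_abs, sq_abs] at h
  rw [div_mul_eq_mul_div, one_div_mul_eq_div, ← add_div, div_le_iff₀ hμL]
  linarith

variable [CompleteSpace E]

theorem HasGradientAt.sub {f₁ f₂ : E → ℝ} {g₁ g₂ x : E} (h₁ : HasGradientAt f₁ g₁ x)
    (h₂ : HasGradientAt f₂ g₂ x) : HasGradientAt (fun z => f₁ z - f₂ z) (g₁ - g₂) x := by
  rw [hasGradientAt_iff_hasFDerivAt, map_sub]
  exact (hasGradientAt_iff_hasFDerivAt.mp h₁).sub (hasGradientAt_iff_hasFDerivAt.mp h₂)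

theorem hasGradientAt_half_mul_norm_sq (c : ℝ) (x : E) :
    HasGradientAt (fun z => c / 2 * ‖z‖ ^ 2) (c • x) x := by
  rw [hasGradientAt_iff_hasFDerivAt]
  refine ((hasStrictFDerivAt_norm_sq x).hasFDerivAt.const_mul (c / 2)).congr_fderiv ?_
  ext v
  simp only [smul_apply, coe_innerSL_apply, nsmul_eq_mul, Nat.cast_ofNat,
    smul_eq_mul, map_smul, InnerProductSpace.toDual_apply_apply]
  ring

theorem HasGradientAt.hasDerivAt_comp_add_smul {h : E → ℝ} {G x v : E} {t : ℝ}
    (hG : HasGradientAt h G (x + t • v)) :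
    HasDerivAt (fun s : ℝ => h (x + s • v)) ⟪G, v⟫ t := by
  have hline : HasDerivAt (fun s : ℝ => x + s • v) v t := by
    simpa using ((hasDerivAt_id t).smul_const v).const_add x
  have := (hasGradientAt_iff_hasFDerivAt.mp hG).comp_hasDerivAt t hline
  rwa [InnerProductSpace.toDual_apply_apply] at this

theorem ConvexOn.add_inner_le_of_hasGradientAt {h : E → ℝ} {G x : E}
    (hconv : ConvexOn ℝ univ h) (hG : HasGradientAt h G x) (y : E) :
    h x + ⟪G, y - x⟫ ≤ h y := by
  have hd : HasDerivAt (fun s : ℝ => h (x + s • (y - x))) ⟪G, y - x⟫ 0 :=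
    HasGradientAt.hasDerivAt_comp_add_smul (by simpa using hG)
  have := (hconv.comp_add_smul x (y - x)).le_slope_of_hasDerivAt (mem_univ 0) (mem_univ 1)
    one_pos hd
  simp only [slope_def_field, one_smul, add_sub_cancel, zero_smul, add_zero, sub_zero,
    div_one] at this
  linarith

theorem convexOn_univ_of_inner_sub_nonneg {h : E → ℝ} {G : E → E}
    (hG : ∀ x, HasGradientAt h (G x) x) (hmono : ∀ x y, 0 ≤ ⟪G x - G y, x - y⟫) :
    ConvexOn ℝ univ h := by
  refine ⟨convex_univ, fun x _ y _ a b ha hb hab => ?_⟩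
  set φ : ℝ → ℝ := fun s => h (x + s • (y - x))
  have hφ' : ∀ t, HasDerivAt φ ⟪G (x + t • (y - x)), y - x⟫ t := fun t =>
    (hG _).hasDerivAt_comp_add_smul
  have hφ : ConvexOn ℝ univ φ := by
    refine Monotone.convexOn_univ_of_deriv (fun t => (hφ' t).differentiableAt) fun s t hst => ?_
    rw [(hφ' s).deriv, (hφ' t).deriv, ← sub_nonneg, ← inner_sub_left]
    rcases hst.eq_or_lt with rfl | hst
    · simp
    have key := hmono (x + t • (y - x)) (x + s • (y - x))
    rw [add_sub_add_left_eq_sub, ← sub_smul, real_inner_smul_right] at key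
    exact nonneg_of_mul_nonneg_right key (sub_pos.2 hst)
  have hcomb : a • x + b • y = x + b • (y - x) := by
    rw [eq_sub_of_add_eq hab]; module
  simpa [φ, hcomb] using hφ.2 (mem_univ 0) (mem_univ 1) ha hb hab

theorem ConvexOn.le_add_inner_add_half_mul_norm_sub_sq {h : E → ℝ} {G x : E} {K : ℝ}
    (hconv : ConvexOn ℝ univ fun z => K / 2 * ‖z‖ ^ 2 - h z) (hG : HasGradientAt h G x)
    (y : E) : h y ≤ h x + ⟪G, y - x⟫ + K / 2 * ‖y - x‖ ^ 2 := by
  have := hconv.add_inner_le_of_hasGradientAt ((hasGradientAt_half_mul_norm_sq K x).sub hG) y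
  have hx : ⟪x, y - x⟫ = ⟪x, y⟫ - ‖x‖ ^ 2 := by
    rw [inner_sub_right, real_inner_self_eq_norm_sq]
  rw [inner_sub_left, real_inner_smul_left, hx] at this
  rw [norm_sub_sq_real, real_inner_comm x y]
  linarith

theorem ConvexOn.norm_sub_sq_le_of_hasGradientAt {h : E → ℝ} {Gx Gy x y : E} {K : ℝ}
    (hK : 0 ≤ K) (hconv : ConvexOn ℝ univ h)
    (hsmooth : ConvexOn ℝ univ fun z => K / 2 * ‖z‖ ^ 2 - h z)
    (hx : HasGradientAt h Gx x) (hy : HasGradientAt h Gy y) :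
    ‖Gy - Gx‖ ^ 2 ≤ 2 * K * (h y - h x - ⟪Gx, y - x⟫) := by
  suffices ∀ t : ℝ, h x + ⟪Gx, y - x⟫ - h y ≤ (K / 2 * t ^ 2 - t) * ‖Gy - Gx‖ ^ 2 by
    linarith [le_neg_two_mul_mul_of_forall_le hK this]
  intro t
  set z := y - t • (Gy - Gx)
  have hlow := hconv.add_inner_le_of_hasGradientAt hx z
  have hup := hsmooth.le_add_inner_add_half_mul_norm_sub_sq hy z
  have hzx : z - x = (y - x) - t • (Gy - Gx) := by module
  have hzy : z - y = -(t • (Gy - Gx)) := by module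
  rw [hzx, inner_sub_right, real_inner_smul_right] at hlow
  rw [hzy, norm_neg, norm_smul, mul_pow, Real.norm_eq_abs, sq_abs, inner_neg_right,
    real_inner_smul_right] at hup
  have hv : ⟪Gy, Gy - Gx⟫ - ⟪Gx, Gy - Gx⟫ = ‖Gy - Gx‖ ^ 2 := by
    rw [← inner_sub_left, real_inner_self_eq_norm_sq]
  linear_combination hlow + hup - t * hv

theorem ConvexOn.norm_sub_sq_le_mul_inner_of_hasGradientAt {h : E → ℝ} {G : E → E} {K : ℝ}
    (hK : 0 ≤ K) (hconv : ConvexOn ℝ univ h)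
    (hsmooth : ConvexOn ℝ univ fun z => K / 2 * ‖z‖ ^ 2 - h z)
    (hG : ∀ x, HasGradientAt h (G x) x) (x y : E) :
    ‖G x - G y‖ ^ 2 ≤ K * ⟪G x - G y, x - y⟫ := by
  have hxy := hconv.norm_sub_sq_le_of_hasGradientAt hK hsmooth (hG x) (hG y)
  have hyx := hconv.norm_sub_sq_le_of_hasGradientAt hK hsmooth (hG y) (hG x)
  rw [norm_sub_rev] at hxy
  have hsum : ⟪G x - G y, x - y⟫ = -⟪G x, y - x⟫ - ⟪G y, x - y⟫ := by
    rw [← neg_sub x y, inner_neg_right, inner_sub_left]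
    ring
  linear_combination (hxy + hyx) / 2 - K * hsum

theorem convexOn_half_mul_norm_sq_sub_of_lipschitz {f : E → ℝ} {g : E → E} {L : ℝ}
    (hgrad : ∀ x, HasGradientAt f (g x) x) (hlip : ∀ x y, ‖g x - g y‖ ≤ L * ‖x - y‖) :
    ConvexOn ℝ univ fun z => L / 2 * ‖z‖ ^ 2 - f z := by
  refine convexOn_univ_of_inner_sub_nonneg
    (fun z => (hasGradientAt_half_mul_norm_sq L z).sub (hgrad z)) fun x y => ?_
  have hsplit : L • x - g x - (L • y - g y) = L • (x - y) - (g x - g y) := by module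
  rw [hsplit, inner_sub_left, real_inner_smul_left, real_inner_self_eq_norm_sq]
  have hcs := real_inner_le_norm (g x - g y) (x - y)
  have hlip' := mul_le_mul_of_nonneg_right (hlip x y) (norm_nonneg (x - y))
  nlinarith

end InnerProductSpace

/-- Coercivity inequality for strongly convex functions with Lipschitz gradient
(Nesterov): `⟨∇f(x) - ∇f(y), x - y⟩ ≥ μL/(μ+L) ‖x-y‖² + 1/(μ+L) ‖∇f(x)-∇f(y)‖²`. -/
theorem strong_convex_lipschitz_grad_coercivity
    {p : ℕ} (f : EuclideanSpace ℝ (Fin p) → ℝ)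
    (g : EuclideanSpace ℝ (Fin p) → EuclideanSpace ℝ (Fin p))
    (μ L : ℝ) (hμ : 0 < μ) (hμL : μ ≤ L)
    (hgrad : ∀ x, HasGradientAt f (g x) x)
    (hsc : StrongConvexOn Set.univ μ f)
    (hlip : ∀ x y, ‖g x - g y‖ ≤ L * ‖x - y‖) :
    ∀ x y : EuclideanSpace ℝ (Fin p),
      μ * L / (μ + L) * ‖x - y‖ ^ 2 + 1 / (μ + L) * ‖g x - g y‖ ^ 2 ≤
        ⟪g x - g y, x - y⟫ := by
  intro x y
  have hG : ∀ z, HasGradientAt (fun w => f w - μ / 2 * ‖w‖ ^ 2) (g z - μ • z) z := fun z =>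
    (hgrad z).sub (hasGradientAt_half_mul_norm_sq μ z)
  have hsmooth : ConvexOn ℝ univ fun z => (L - μ) / 2 * ‖z‖ ^ 2 - (f z - μ / 2 * ‖z‖ ^ 2) :=
    (convexOn_half_mul_norm_sq_sub_of_lipschitz hgrad hlip).congr fun z _ => by ring
  have hcoco := (strongConvexOn_iff_convex.mp hsc).norm_sub_sq_le_mul_inner_of_hasGradientAt
    (sub_nonneg.2 hμL) hsmooth hG x y
  rw [show g x - μ • x - (g y - μ • y) = g x - g y - μ • (x - y) by module] at hcoco
  exact inner_lower_bound_of_norm_sub_smul_sq_le (by linarith) hcoco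
end

section
/- Let (d_k)_{k ≥ k₀} be a nonnegative sequence satisfying d_{k+1} ≤ (1 - ηᾱ/(k+1)) d_k + ᾱ²Δ₀/(k+1)² + ᾱΔ₂/(k+1) for all k ≥ k₀, where η > 0, ᾱ > 1/η, ηᾱ/(k+1) ∈ (0,1) for k ≥ k₀, and Δ₀, Δ₂ ≥ 0. Define Δ₁ = max{ ᾱ²Δ₀/(ηᾱ - 1), (k₀+1) d_{k₀} + ᾱ²Δ₀/(k₀+1) }. Then for every k ≥ k₀, d_{k+1} ≤ Δ₁/(k+1) + ᾱΔ₂. -/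
/-!
With `c = ηᾱ > 1`, `a = ᾱ²Δ₀` and `b = ᾱΔ₂`, the bound `d (k+1) ≤ D/(k+1) + b` is an invariant
of the recursion as soon as `a ≤ D (c - 1)`: one step multiplies the `D`-part by
`1 - c/(k+2)` and adds at most `D (c-1)/(k+2)²`, which together stay below `D/(k+2)` because
`c ≥ 1`. The second term of the maximum makes the invariant hold at the first step `k = k₀`.
-/

namespace DiminishingStep

lemma bound_start {K c a b D x : ℝ} (hK : 1 ≤ K) (hc : 0 ≤ c) (hx : 0 ≤ x) (hb : 0 ≤ b)
    (hD : K * x + a / K ≤ D) :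
    (1 - c / K) * x + a / K ^ 2 + b / K ≤ D / K + b := by
  have hK0 : 0 < K := by linarith
  have hinit : (K * x + a / K) / K ≤ D / K := div_le_div_of_nonneg_right hD hK0.le
  have hcx : 0 ≤ c * x / K := by positivity
  have hbK : b / K ≤ b := div_le_self hb hK
  calc (1 - c / K) * x + a / K ^ 2 + b / K = (K * x + a / K) / K - c * x / K + b / K := by
        field_simp; ring
    _ ≤ D / K + b := by linarith

lemma bound_succ {t c a b D x : ℝ} (ht : 0 < t) (hc : 1 ≤ c) (hct : c / (t + 1) ≤ 1)
    (hb : 0 ≤ b) (hD : 0 ≤ D) (hDa : a ≤ D * (c - 1)) (hx : x ≤ D / t + b) :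
    (1 - c / (t + 1)) * x + a / (t + 1) ^ 2 + b / (t + 1) ≤ D / (t + 1) + b := by
  have hcontr : 0 ≤ 1 - c / (t + 1) := sub_nonneg.mpr hct
  calc (1 - c / (t + 1)) * x + a / (t + 1) ^ 2 + b / (t + 1)
      ≤ (1 - c / (t + 1)) * (D / t + b) + D * (c - 1) / (t + 1) ^ 2 + b / (t + 1) := by
        gcongr
    _ = D / (t + 1) + b - (c - 1) * (D / (t * (t + 1) ^ 2) + b / (t + 1)) := by
        field_simp; ring
    _ ≤ D / (t + 1) + b := by
        have : 0 ≤ c - 1 := by linarith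
        apply sub_le_self; positivity

theorem bound_of_rec (d : ℕ → ℝ) (k₀ : ℕ) {c a b D : ℝ} (hd₀ : 0 ≤ d k₀) (hc : 1 ≤ c)
    (hb : 0 ≤ b) (hD : 0 ≤ D) (hDa : a ≤ D * (c - 1))
    (hDstart : (k₀ + 1 : ℝ) * d k₀ + a / (k₀ + 1 : ℝ) ≤ D)
    (hstep : ∀ k, k₀ ≤ k → c / (k + 1 : ℝ) ≤ 1)
    (hrec : ∀ k, k₀ ≤ k →
      d (k + 1) ≤ (1 - c / (k + 1 : ℝ)) * d k + a / (k + 1 : ℝ) ^ 2 + b / (k + 1 : ℝ)) :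
    ∀ k, k₀ ≤ k → d (k + 1) ≤ D / (k + 1 : ℝ) + b := by
  intro k hk
  induction k, hk using Nat.le_induction with
  | base =>
    exact (hrec k₀ le_rfl).trans
      (bound_start (by simp) (by linarith) hd₀ hb hDstart)
  | succ k hk ih =>
    have hrec' := hrec (k + 1) (by omega)
    have hstep' := hstep (k + 1) (by omega)
    push_cast at hrec' hstep' ⊢
    exact hrec'.trans (bound_succ (by positivity) hc hstep' hb hD hDa ih)

end DiminishingStep

/-- Diminishing step-size recursion yields an `O(1/k)` rate plus a constant offset. -/
theorem diminishing_step_recursion_bound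
    (d : ℕ → ℝ) (k₀ : ℕ) (η ᾱ Δ₀ Δ₂ : ℝ)
    (hd : ∀ k, 0 ≤ d k)
    (hη : 0 < η) (hᾱ : 1 / η < ᾱ)
    (hstep : ∀ k, k₀ ≤ k → η * ᾱ / (k + 1 : ℝ) < 1)
    (hΔ₀ : 0 ≤ Δ₀) (hΔ₂ : 0 ≤ Δ₂)
    (hrec : ∀ k, k₀ ≤ k →
      d (k + 1) ≤ (1 - η * ᾱ / (k + 1 : ℝ)) * d k
        + ᾱ ^ 2 * Δ₀ / ((k + 1 : ℝ)) ^ 2 + ᾱ * Δ₂ / (k + 1 : ℝ)) :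
    ∀ k, k₀ ≤ k →
      d (k + 1) ≤
        max (ᾱ ^ 2 * Δ₀ / (η * ᾱ - 1))
            ((k₀ + 1 : ℝ) * d k₀ + ᾱ ^ 2 * Δ₀ / (k₀ + 1 : ℝ)) / (k + 1 : ℝ)
        + ᾱ * Δ₂ := by
  have hc : 1 < η * ᾱ := by rwa [div_lt_iff₀ hη, mul_comm] at hᾱ
  have hᾱ₀ : 0 < ᾱ := lt_trans (by positivity) hᾱ
  have hgap : 0 < η * ᾱ - 1 := sub_pos.mpr hc
  have hD : 0 ≤ ᾱ ^ 2 * Δ₀ / (η * ᾱ - 1) := by positivity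
  refine DiminishingStep.bound_of_rec d k₀ (hd k₀) hc.le (by positivity)
    (hD.trans (le_max_left _ _)) ?_ (le_max_right _ _) (fun k hk ↦ (hstep k hk).le) hrec
  exact (div_le_iff₀ hgap).mp (le_max_left _ _)
end
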